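/- Let G be a finite group, H a subgroup, and g ∈ G with HgH a single double coset. Suppose that for each i ∈ {0,1,…,s−1}, H^g ∩ H^{g²} ∩ ⋯ ∩ H^{g^i} = (H ∩ H^g ∩ ⋯ ∩ H^{g^i})·(H^g ∩ H^{g²} ∩ ⋯ ∩ H^{g^{i+1}}) (where an empty intersection is G). Then the coset digraph Cos(G,H,HgH) is s-arc-transitive (with the right-multiplication action of G acting transitively on s-arcs). -/
import Mathlib


open scoped Pointwise

/-- The conjugate subgroup `H^x = x⁻¹ H x`. -/
def conjSubgroup {G : Type*} [Group G] (H : Subgroup G) (x : G) : Subgroup G :=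
  Subgroup.map (MulAut.conj x⁻¹).toMonoidHom H

/-- The arc relation of the coset digraph `Cos(G,H,HgH)`: the vertices are the right cosets
`Hx` of `H` in `G` (the quotient by `QuotientGroup.rightRel H`), and `Hx → Hy` iff
`y x⁻¹ ∈ HgH`. -/
def cosArc {G : Type*} [Group G] (H : Subgroup G) (g : G)
    (u v : Quotient (QuotientGroup.rightRel H)) : Prop :=
  ∃ x y : G, Quotient.mk (QuotientGroup.rightRel H) x = u ∧
    Quotient.mk (QuotientGroup.rightRel H) y = v ∧
    ∃ h₁ ∈ H, ∃ h₂ ∈ H, y * x⁻¹ = h₁ * g * h₂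

section Stmt15Aux

variable {G : Type*} [Group G]

lemma mem_conjSubgroup' {H : Subgroup G} {a x : G} :
    x ∈ conjSubgroup H a ↔ a * x * a⁻¹ ∈ H := by
  simp only [conjSubgroup, Subgroup.mem_map, MulEquiv.coe_toMonoidHom, MulAut.conj_apply,
    inv_inv]
  constructor
  · rintro ⟨h, hh, rfl⟩
    have : a * (a⁻¹ * h * a) * a⁻¹ = h := by group
    rwa [this]
  · intro hx
    exact ⟨a * x * a⁻¹, hx, by group⟩

lemma mk_eq_mk' {H : Subgroup G} {x y : G} :
    Quotient.mk (QuotientGroup.rightRel H) x = Quotient.mk (QuotientGroup.rightRel H) y ↔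
      y * x⁻¹ ∈ H := by
  constructor
  · intro h; exact QuotientGroup.rightRel_apply.mp (Quotient.exact h)
  · intro h; exact Quotient.sound (QuotientGroup.rightRel_apply.mpr h)

/-- The word `g k_{i-1} g k_{i-2} ⋯ g k_0`. -/
def wrd (g : G) (k : ℕ → G) : ℕ → G
  | 0 => 1
  | (i+1) => g * k i * wrd g k i

lemma wrd_congr {g : G} {k k' : ℕ → G} {i : ℕ} (h : ∀ j < i, k j = k' j) :
    wrd g k i = wrd g k' i := by
  induction i with
  | zero => rfl
  | succ i ih =>
    simp only [wrd]
    rw [ih (fun j hj => h j (by omega)), h i (by omega)]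

lemma wrd_shift {g : G} {k : ℕ → G} {i : ℕ} :
    wrd g k (i+1) = wrd g (fun j => k (j+1)) i * (g * k 0) := by
  induction i with
  | zero => simp [wrd]
  | succ i ih =>
    simp only [wrd] at *
    rw [ih]
    group

lemma mem_iInf_Icc' {H : Subgroup G} {g : G} {a b : ℕ} {x : G} :
    x ∈ (⨅ j ∈ Finset.Icc a b, conjSubgroup H (g ^ j)) ↔
      ∀ j, a ≤ j → j ≤ b → g ^ j * x * (g ^ j)⁻¹ ∈ H := by
  simp [Subgroup.mem_iInf, Finset.mem_Icc, mem_conjSubgroup', and_imp]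

lemma chain' {H : Subgroup G} {g : G} {s : ℕ}
    (hint : ∀ i < s,
      ((⨅ j ∈ Finset.Icc 1 i, conjSubgroup H (g ^ j) : Subgroup G) : Set G) =
        ((⨅ j ∈ Finset.Icc 0 i, conjSubgroup H (g ^ j) : Subgroup G) : Set G) *
        ((⨅ j ∈ Finset.Icc 1 (i + 1), conjSubgroup H (g ^ j) : Subgroup G) : Set G)) :
    ∀ t ≤ s, ∀ x : G, ∃ h ∈ H,
      ∃ b ∈ (⨅ j ∈ Finset.Icc 1 t, conjSubgroup H (g ^ j) : Subgroup G), x = h * b := by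
  intro t
  induction t with
  | zero =>
    intro _ x
    refine ⟨1, one_mem _, x, ?_, by simp⟩
    rw [mem_iInf_Icc']
    intro j hj hj'
    omega
  | succ t ih =>
    intro hts x
    obtain ⟨h, hh, b, hb, rfl⟩ := ih (by omega) x
    have hbset : b ∈ ((⨅ j ∈ Finset.Icc 0 t, conjSubgroup H (g ^ j) : Subgroup G) : Set G) *
        ((⨅ j ∈ Finset.Icc 1 (t + 1), conjSubgroup H (g ^ j) : Subgroup G) : Set G) := by
      rw [← hint t (by omega)]; exact hb
    obtain ⟨a, ha, b', hb', rfl⟩ := hbset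
    refine ⟨h * a, mul_mem hh ?_, b', hb', by group⟩
    have := mem_iInf_Icc'.mp ha 0 (le_refl 0) (Nat.zero_le t)
    simpa using this

lemma main' {H : Subgroup G} {g : G} {s : ℕ}
    (hint : ∀ i < s,
      ((⨅ j ∈ Finset.Icc 1 i, conjSubgroup H (g ^ j) : Subgroup G) : Set G) =
        ((⨅ j ∈ Finset.Icc 0 i, conjSubgroup H (g ^ j) : Subgroup G) : Set G) *
        ((⨅ j ∈ Finset.Icc 1 (i + 1), conjSubgroup H (g ^ j) : Subgroup G) : Set G)) :
    ∀ t ≤ s, ∀ k : ℕ → G, (∀ i, k i ∈ H) →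
      ∃ c ∈ H, ∀ i ≤ t, g ^ i * c * (wrd g k i)⁻¹ ∈ H := by
  intro t
  induction t with
  | zero =>
    intro _ k hk
    refine ⟨1, one_mem _, ?_⟩
    intro i hi
    interval_cases i
    simp only [wrd, pow_zero, one_mul, inv_one, mul_one]
    exact one_mem _
  | succ t ih =>
    intro hts k hk
    obtain ⟨c, hc, hcw⟩ := ih (by omega) (fun j => k (j+1)) (fun j => hk (j+1))
    obtain ⟨h, hh, e, he, hq⟩ := chain' hint (t+1) hts (g⁻¹ * c⁻¹ * g)
    have hdH : e * (g⁻¹ * c * g * k 0) ∈ H := by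
      have he' : e = h⁻¹ * (g⁻¹ * c⁻¹ * g) := by rw [hq]; group
      rw [he']
      have : h⁻¹ * (g⁻¹ * c⁻¹ * g) * (g⁻¹ * c * g * k 0) = h⁻¹ * k 0 := by group
      rw [this]
      exact mul_mem (inv_mem hh) (hk 0)
    refine ⟨e * (g⁻¹ * c * g * k 0), hdH, ?_⟩
    intro i hi
    match i, hi with
    | 0, _ => simpa [wrd] using hdH
    | (j+1), hj =>
      have h1 : g ^ (j+1) * e * (g ^ (j+1))⁻¹ ∈ H :=
        mem_iInf_Icc'.mp he (j+1) (by omega) (by omega)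
      have h2 : g ^ j * c * (wrd g (fun m => k (m+1)) j)⁻¹ ∈ H := hcw j (by omega)
      have key : g ^ (j+1) * (e * (g⁻¹ * c * g * k 0)) * (wrd g k (j+1))⁻¹ =
          (g ^ (j+1) * e * (g ^ (j+1))⁻¹) *
            (g ^ j * c * (wrd g (fun m => k (m+1)) j)⁻¹) := by
        rw [wrd_shift, pow_succ]
        generalize wrd g (fun m => k (m+1)) j = Wj
        generalize g ^ j = Gj
        group
      rw [key]
      exact mul_mem h1 h2

end Stmt15Aux

/-- Let `G` be a group, `H` a subgroup, and `g ∈ G` with `g ∉ H`. Suppose that for each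
`i ∈ {0,1,…,s−1}`,
`H^g ∩ H^{g²} ∩ ⋯ ∩ H^{g^i} = (H ∩ H^g ∩ ⋯ ∩ H^{g^i}) · (H^g ∩ H^{g²} ∩ ⋯ ∩ H^{g^{i+1}})`
(where an empty intersection is `G`). Then the coset digraph `Cos(G,H,HgH)` is
`s`-arc-transitive: the right-multiplication action of `G` is transitive on `s`-arcs. -/
theorem stmt15 (G : Type*) [Group G] (H : Subgroup G) (g : G) (s : ℕ) (hgH : g ∉ H)
    (hint : ∀ i < s,
      ((⨅ j ∈ Finset.Icc 1 i, conjSubgroup H (g ^ j) : Subgroup G) : Set G) =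
        ((⨅ j ∈ Finset.Icc 0 i, conjSubgroup H (g ^ j) : Subgroup G) : Set G) *
        ((⨅ j ∈ Finset.Icc 1 (i + 1), conjSubgroup H (g ^ j) : Subgroup G) : Set G)) :
    ∀ v w : Fin (s + 1) → Quotient (QuotientGroup.rightRel H),
      (∀ i : Fin s, cosArc H g (v i.castSucc) (v i.succ)) →
      (∀ i : Fin s, cosArc H g (w i.castSucc) (w i.succ)) →
      ∃ q : G, ∀ i : Fin (s + 1), ∃ x : G,
        Quotient.mk (QuotientGroup.rightRel H) x = v i ∧
        Quotient.mk (QuotientGroup.rightRel H) (x * q) = w i := by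
  classical
  intro v w hv hw
  have key : ∀ (u : Fin (s+1) → Quotient (QuotientGroup.rightRel H)),
      (∀ i : Fin s, cosArc H g (u i.castSucc) (u i.succ)) →
      ∃ r : G, ∀ i : Fin (s+1),
        u i = Quotient.mk (QuotientGroup.rightRel H) (g ^ (i : ℕ) * r) := by
    intro u hu
    obtain ⟨x₀, hx₀⟩ := Quotient.exists_rep (u ⟨0, Nat.succ_pos s⟩)
    have build : ∀ t, (ht : t ≤ s) → ∃ k : ℕ → G, (∀ i, k i ∈ H) ∧
        ∀ i, (hi : i ≤ t) → u ⟨i, by omega⟩ =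
          Quotient.mk (QuotientGroup.rightRel H) (wrd g k i * x₀) := by
      intro t
      induction t with
      | zero =>
        intro _
        refine ⟨fun _ => 1, fun _ => one_mem _, ?_⟩
        intro i hi
        interval_cases i
        simp only [wrd, one_mul]
        exact hx₀.symm
      | succ t ih =>
        intro hts
        obtain ⟨k, hkH, hkw⟩ := ih (by omega)
        obtain ⟨x, y, hx, hy, h₁, hh₁, h₂, hh₂, hxy⟩ := hu ⟨t, by omega⟩
        rw [Fin.castSucc_mk] at hx
        rw [Fin.succ_mk] at hy
        have h₃ : (wrd g k t * x₀) * x⁻¹ ∈ H := mk_eq_mk'.mp (hx.trans (hkw t le_rfl))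
        set κ : G := h₂ * ((wrd g k t * x₀) * x⁻¹)⁻¹ with hκdef
        have hκ : κ ∈ H := mul_mem hh₂ (inv_mem h₃)
        refine ⟨Function.update k t κ, ?_, ?_⟩
        · intro i
          by_cases hit : i = t
          · subst hit; rw [Function.update_self]; exact hκ
          · rw [Function.update_of_ne hit]; exact hkH i
        · intro i hi
          have hlow : ∀ m, m ≤ t → wrd g (Function.update k t κ) m = wrd g k m := by
            intro m hm
            refine (wrd_congr ?_).symm
            intro j hj
            exact (Function.update_of_ne (by omega : j ≠ t) κ k).symm
          rcases Nat.lt_or_ge i (t+1) with hlt | hge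
          · rw [hlow i (by omega)]
            exact hkw i (by omega)
          · have hi' : i = t + 1 := by omega
            subst hi'
            have hw' : wrd g (Function.update k t κ) (t+1) = g * κ * wrd g k t := by
              show g * (Function.update k t κ) t * wrd g (Function.update k t κ) t = _
              rw [Function.update_self, hlow t le_rfl]
            rw [hw', ← hy]
            refine (mk_eq_mk'.mpr ?_).symm
            have hyx : y = (h₁ * g * h₂) * x := by
              have : y * x⁻¹ * x = (h₁ * g * h₂) * x := by rw [hxy]
              simpa [mul_assoc] using this
            rw [hκdef, hyx]
            have : h₁ * g * h₂ * x *
                (g * (h₂ * (wrd g k t * x₀ * x⁻¹)⁻¹) * wrd g k t * x₀)⁻¹ = h₁ := by group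
            rw [this]
            exact hh₁
    obtain ⟨k, hkH, hkw⟩ := build s le_rfl
    obtain ⟨c, hcH, hc⟩ := main' hint s le_rfl k hkH
    refine ⟨c * x₀, ?_⟩
    intro i
    have hile : (i : ℕ) ≤ s := Nat.lt_succ_iff.mp i.isLt
    have h1 := hkw (i : ℕ) hile
    have h2 : Quotient.mk (QuotientGroup.rightRel H) (wrd g k (i : ℕ) * x₀) =
        Quotient.mk (QuotientGroup.rightRel H) (g ^ (i : ℕ) * (c * x₀)) := by
      refine mk_eq_mk'.mpr ?_
      have : (g ^ (i : ℕ) * (c * x₀)) * (wrd g k (i : ℕ) * x₀)⁻¹ =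
          g ^ (i : ℕ) * c * (wrd g k (i : ℕ))⁻¹ := by group
      rw [this]
      exact hc (i : ℕ) hile
    have heta : (⟨(i : ℕ), by omega⟩ : Fin (s+1)) = i := Fin.ext rfl
    rw [← heta, h1, h2]
  obtain ⟨rv, hrv⟩ := key v hv
  obtain ⟨rw_, hrw⟩ := key w hw
  refine ⟨rv⁻¹ * rw_, fun i => ⟨g ^ (i : ℕ) * rv, (hrv i).symm, ?_⟩⟩
  have : g ^ (i : ℕ) * rv * (rv⁻¹ * rw_) = g ^ (i : ℕ) * rw_ := by group
  rw [this]
  exact (hrw i).symm
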